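/- arXiv:2406.04472 — 12 statements merged into one kernel-verified Lean document; each statement's English description precedes it below -/
import Mathlib

section
/- For every formula φ, weight function w, and variable x, the real function t ↦ WMC(φ; Function.update w x t) has derivative WMC(φ ∣ x; w) - WMC(φ ∣ ¬x; w) at the point w x (in fact at every point t ∈ ℝ, since the conditioned counts do not depend on the weight of x). -/
-- The probability of an interpretation `I : V → Bool` under weights `w`.
noncomputable def Pw {V : Type*} [Fintype V] (w : V → ℝ) (I : V → Bool) : ℝ :=
  ∏ v, if I v then w v else 1 - w v

-- The weighted model count of a formula `φ` under weights `w`.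
open Classical in
noncomputable def WMC {V : Type*} [Fintype V] [DecidableEq V]
    (φ : (V → Bool) → Prop) (w : V → ℝ) : ℝ :=
  ∑ I : V → Bool, if φ I then Pw w I else 0

-- The weighted model count of `φ` conditioned on `x` being true.
open Classical in
noncomputable def WMCpos {V : Type*} [Fintype V] [DecidableEq V]
    (φ : (V → Bool) → Prop) (w : V → ℝ) (x : V) : ℝ :=
  ∑ I : V → Bool, if φ I ∧ I x = true then
    ∏ v ∈ Finset.univ.erase x, (if I v then w v else 1 - w v) else 0

-- The weighted model count of `φ` conditioned on `x` being false.
open Classical in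
noncomputable def WMCneg {V : Type*} [Fintype V] [DecidableEq V]
    (φ : (V → Bool) → Prop) (w : V → ℝ) (x : V) : ℝ :=
  ∑ I : V → Bool, if φ I ∧ I x = false then
    ∏ v ∈ Finset.univ.erase x, (if I v then w v else 1 - w v) else 0

open Classical in
lemma wmc_key {V : Type*} [Fintype V] [DecidableEq V]
    (φ : (V → Bool) → Prop) (w : V → ℝ) (x : V) (t : ℝ) :
    WMC φ (Function.update w x t) =
      WMCneg φ w x + t * (WMCpos φ w x - WMCneg φ w x) := by
  classical
  unfold WMC WMCpos WMCneg Pw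
  rw [← Finset.sum_sub_distrib, Finset.mul_sum, ← Finset.sum_add_distrib]
  refine Finset.sum_congr rfl fun I _ => ?_
  have hx : x ∈ (Finset.univ : Finset V) := Finset.mem_univ x
  have hprod : (∏ v, if I v then Function.update w x t v else 1 - Function.update w x t v)
      = (if I x then t else 1 - t) *
        ∏ v ∈ Finset.univ.erase x, (if I v then w v else 1 - w v) := by
    rw [← Finset.mul_prod_erase _ _ hx]
    congr 1
    · simp [Function.update_self]
    · refine Finset.prod_congr rfl fun v hv => ?_
      have hne : v ≠ x := (Finset.mem_erase.mp hv).1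
      simp [Function.update_of_ne hne]
  by_cases hφ : φ I
  · rcases Bool.eq_false_or_eq_true (I x) with hb | hb <;>
      simp [hφ, hb, hprod] <;> ring
  · simp [hφ]

/-- the function `t ↦ WMC(φ; Function.update w x t)` has derivative
`WMC(φ ∣ x; w) - WMC(φ ∣ ¬x; w)` at every point `t : ℝ` (in particular at `w x`). -/
theorem wmc_hasDerivAt {V : Type*} [Fintype V] [DecidableEq V]
    (φ : (V → Bool) → Prop) (w : V → ℝ) (hw : ∀ v, 0 ≤ w v ∧ w v ≤ 1) (x : V) :
    ∀ t : ℝ, HasDerivAt (fun t => WMC φ (Function.update w x t))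
      (WMCpos φ w x - WMCneg φ w x) t := by
  intro t
  have h : (fun t => WMC φ (Function.update w x t)) =
      fun t => WMCneg φ w x + t * (WMCpos φ w x - WMCneg φ w x) := by
    funext s; exact wmc_key φ w x s
  rw [h]
  simpa using ((hasDerivAt_id t).mul_const (WMCpos φ w x - WMCneg φ w x)).const_add (WMCneg φ w x)
end

section
/- Score function estimator identity: fix a variable x with 0 < w x < 1. Then WMC(φ ∣ x; w) - WMC(φ ∣ ¬x; w) = ∑_{I : V → Bool, φ I} P(I; w) · g(I), where g(I) = 1 / (w x) if I x = true and g(I) = -1 / (1 - w x) if I x = false (g(I) is the partial derivative of log P(I; w) with respect to the weight of x). -/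
open Classical in
theorem score_function_estimator_identity {V : Type*} [Fintype V] [DecidableEq V]
    (φ : (V → Bool) → Prop) (w : V → ℝ) (hw : ∀ v, 0 ≤ w v ∧ w v ≤ 1) (x : V)
    (hx : 0 < w x ∧ w x < 1) :
    WMCpos φ w x - WMCneg φ w x =
      ∑ I : V → Bool, if φ I then
        Pw w I * (if I x = true then 1 / w x else -(1 / (1 - w x))) else 0 := by
  rw [WMCpos, WMCneg, ← Finset.sum_sub_distrib]
  apply Finset.sum_congr rfl
  intro I _
  have hP : Pw w I = (if I x then w x else 1 - w x) *
      ∏ v ∈ Finset.univ.erase x, (if I v then w v else 1 - w v) := by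
    rw [Pw, ← Finset.mul_prod_erase Finset.univ _ (Finset.mem_univ x)]
  by_cases hφ : φ I
  · cases h : I x <;> simp [hφ, h, hP, mul_comm, mul_assoc, mul_left_comm,
      mul_div_assoc, hx.1.ne', (sub_pos.2 hx.2).ne']
  · simp [hφ]
end

section
/- The single-sample IndeCateR estimator C is unbiased and has variance at most 1: with E[C] = ∑_{I₀, I₁ : V → Bool} P(I₀ ∣ x; w) · P(I₁ ∣ ¬x; w) · ((if φ I₀ then 1 else 0) - (if φ I₁ then 1 else 0)), one has E[C] = WMC(φ ∣ x; w) - WMC(φ ∣ ¬x; w), and the variance ∑_{I₀, I₁} P(I₀ ∣ x; w) · P(I₁ ∣ ¬x; w) · (((if φ I₀ then 1 else 0) - (if φ I₁ then 1 else 0)) - E[C])² is at most 1. -/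
-- The conditional interpretation distribution `P(I ∣ x; w)` (conditioned on `x` true).
noncomputable def PcondT {V : Type*} [Fintype V] [DecidableEq V]
    (w : V → ℝ) (x : V) (I : V → Bool) : ℝ :=
  if I x = true then ∏ v ∈ Finset.univ.erase x, (if I v then w v else 1 - w v) else 0

-- The conditional interpretation distribution `P(I ∣ ¬x; w)` (conditioned on `x` false).
noncomputable def PcondF {V : Type*} [Fintype V] [DecidableEq V]
    (w : V → ℝ) (x : V) (I : V → Bool) : ℝ :=
  if I x = false then ∏ v ∈ Finset.univ.erase x, (if I v then w v else 1 - w v) else 0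

-- STATEMENT 5: the single-sample IndeCateR estimator is unbiased,
section
variable {V : Type*} [Fintype V] [DecidableEq V] (w : V → ℝ) (x : V)

lemma aux_sum_ite (c : Bool) :
    ∑ I : V → Bool, (if I x = c then ∏ v ∈ Finset.univ.erase x, (if I v then w v else 1 - w v) else 0) = 1 := by
  set g : V → Bool → ℝ := fun v b => if v = x then (if b = c then (1:ℝ) else 0) else (if b then w v else 1 - w v) with hg
  have key : ∀ I : V → Bool,
      (if I x = c then ∏ v ∈ Finset.univ.erase x, (if I v then w v else 1 - w v) else 0)
      = ∏ v, g v (I v) := by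
    intro I
    rw [← Finset.prod_erase_mul Finset.univ _ (Finset.mem_univ x)]
    have h1 : ∀ v ∈ Finset.univ.erase x,
        (if v = x then (if I v = c then (1:ℝ) else 0) else (if I v then w v else 1 - w v))
        = (if I v then w v else 1 - w v) := fun v hv => by simp [Finset.ne_of_mem_erase hv]
    rw [Finset.prod_congr rfl h1]
    by_cases h : I x = c <;> simp [hg, h]
  calc ∑ I : V → Bool, (if I x = c then ∏ v ∈ Finset.univ.erase x, (if I v then w v else 1 - w v) else 0)
      = ∑ I : V → Bool, ∏ v, g v (I v) := Finset.sum_congr rfl fun I _ => key I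
    _ = ∏ v, ∑ b, g v b := (Fintype.prod_sum g).symm
    _ = 1 := Finset.prod_eq_one fun v _ => by
        by_cases h : v = x
        · subst h; cases c <;> simp [hg]
        · simp only [hg, if_neg h, if_pos, if_true, Bool.cond_true]
          simp

lemma sum_PcondT : ∑ I : V → Bool, PcondT w x I = 1 := aux_sum_ite w x true
lemma sum_PcondF : ∑ I : V → Bool, PcondF w x I = 1 := aux_sum_ite w x false

lemma PcondT_nonneg (hw : ∀ v, 0 ≤ w v ∧ w v ≤ 1) (I : V → Bool) : 0 ≤ PcondT w x I := by
  unfold PcondT; split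
  · exact Finset.prod_nonneg fun v _ => by
      cases hv : I v <;> simp [hv] <;> linarith [(hw v).1, (hw v).2]
  · exact le_refl 0
end
section
open Classical
variable {V : Type*} [Fintype V] [DecidableEq V] (w : V → ℝ) (x : V)

lemma PcondF_nonneg (hw : ∀ v, 0 ≤ w v ∧ w v ≤ 1) (I : V → Bool) : 0 ≤ PcondF w x I := by
  unfold PcondF; split
  · exact Finset.prod_nonneg fun v _ => by
      cases hv : I v <;> simp [hv] <;> linarith [(hw v).1, (hw v).2]
  · exact le_refl 0

lemma wsum_T (φ : (V → Bool) → Prop) :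
    ∑ I : V → Bool, PcondT w x I * (if φ I then (1:ℝ) else 0) = WMCpos φ w x := by
  unfold WMCpos PcondT
  refine Finset.sum_congr rfl fun I _ => ?_
  by_cases h1 : φ I <;> by_cases h2 : I x = true <;> simp [h1, h2]

lemma wsum_F (φ : (V → Bool) → Prop) :
    ∑ I : V → Bool, PcondF w x I * (if φ I then (1:ℝ) else 0) = WMCneg φ w x := by
  unfold WMCneg PcondF
  refine Finset.sum_congr rfl fun I _ => ?_
  by_cases h1 : φ I <;> by_cases h2 : I x = false <;> simp [h1, h2]

end

open Classical in
theorem indecater_unbiased_and_variance_le_one {V : Type*} [Fintype V] [DecidableEq V]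
    (φ : (V → Bool) → Prop) (w : V → ℝ) (hw : ∀ v, 0 ≤ w v ∧ w v ≤ 1) (x : V)
    (E : ℝ)
    (hE : E = ∑ I₀ : V → Bool, ∑ I₁ : V → Bool,
      PcondT w x I₀ * PcondF w x I₁ *
        ((if φ I₀ then (1 : ℝ) else 0) - (if φ I₁ then (1 : ℝ) else 0))) :
    E = WMCpos φ w x - WMCneg φ w x ∧
      (∑ I₀ : V → Bool, ∑ I₁ : V → Bool,
        PcondT w x I₀ * PcondF w x I₁ *
          (((if φ I₀ then (1 : ℝ) else 0) - (if φ I₁ then (1 : ℝ) else 0)) - E) ^ 2) ≤ 1 := by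
  have hT1 : ∑ I : V → Bool, PcondT w x I = 1 := sum_PcondT w x
  have hF1 : ∑ I : V → Bool, PcondF w x I = 1 := sum_PcondF w x
  have hS11 : ∑ I₀ : V → Bool, ∑ I₁ : V → Bool, PcondT w x I₀ * PcondF w x I₁ = 1 := by
    rw [← Finset.sum_mul_sum, hT1, hF1, one_mul]
  set f : (V → Bool) → ℝ := fun I => if φ I then (1:ℝ) else 0 with hf
  have hunb : E = WMCpos φ w x - WMCneg φ w x := by
    have h1 : (∑ I : V → Bool, PcondT w x I * f I) * (∑ I : V → Bool, PcondF w x I)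
        - (∑ I : V → Bool, PcondT w x I) * (∑ I : V → Bool, PcondF w x I * f I)
        = ∑ I₀ : V → Bool, ∑ I₁ : V → Bool, PcondT w x I₀ * PcondF w x I₁ * (f I₀ - f I₁) := by
      rw [Finset.sum_mul_sum, Finset.sum_mul_sum, ← Finset.sum_sub_distrib]
      refine Finset.sum_congr rfl fun I₀ _ => ?_
      rw [← Finset.sum_sub_distrib]
      exact Finset.sum_congr rfl fun I₁ _ => by ring
    rw [hE, ← h1, hT1, hF1, wsum_T, wsum_F]; ring
  refine ⟨hunb, ?_⟩
  have hsplit :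
      (∑ I₀ : V → Bool, ∑ I₁ : V → Bool, PcondT w x I₀ * PcondF w x I₁ * (f I₀ - f I₁) ^ 2)
        - 2 * E * (∑ I₀ : V → Bool, ∑ I₁ : V → Bool,
            PcondT w x I₀ * PcondF w x I₁ * (f I₀ - f I₁))
        + E ^ 2 * (∑ I₀ : V → Bool, ∑ I₁ : V → Bool, PcondT w x I₀ * PcondF w x I₁)
      = ∑ I₀ : V → Bool, ∑ I₁ : V → Bool,
          PcondT w x I₀ * PcondF w x I₁ * ((f I₀ - f I₁) - E) ^ 2 := by
    simp only [Finset.mul_sum]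
    rw [← Finset.sum_sub_distrib, ← Finset.sum_add_distrib]
    refine Finset.sum_congr rfl fun I₀ _ => ?_
    rw [← Finset.sum_sub_distrib, ← Finset.sum_add_distrib]
    exact Finset.sum_congr rfl fun I₁ _ => by ring
  have hS2le : (∑ I₀ : V → Bool, ∑ I₁ : V → Bool,
      PcondT w x I₀ * PcondF w x I₁ * (f I₀ - f I₁) ^ 2) ≤ 1 := by
    rw [← hS11]
    refine Finset.sum_le_sum fun I₀ _ => Finset.sum_le_sum fun I₁ _ => ?_
    have hd : (f I₀ - f I₁) ^ 2 ≤ 1 := by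
      simp only [hf]
      by_cases h1 : φ I₀ <;> by_cases h2 : φ I₁ <;> simp [h1, h2]
    have hp : 0 ≤ PcondT w x I₀ * PcondF w x I₁ :=
      mul_nonneg (PcondT_nonneg w x hw I₀) (PcondF_nonneg w x hw I₁)
    calc PcondT w x I₀ * PcondF w x I₁ * (f I₀ - f I₁) ^ 2
        ≤ PcondT w x I₀ * PcondF w x I₁ * 1 := mul_le_mul_of_nonneg_left hd hp
      _ = PcondT w x I₀ * PcondF w x I₁ := mul_one _
  rw [← hsplit, ← hE, hS11]
  nlinarith [hS2le, sq_nonneg E]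
end

section
/- Vanishing variance of IndeCateR near convergence: suppose φ has exactly one model M, that M x = true, and that t ≤ (if M v then w v else 1 - w v) ≤ 1 - t for every variable v, where 0 ≤ t ≤ 1/2. Then the variance of the single-sample IndeCateR estimator C satisfies Var[C] ≤ (1 - t)^(card V - 1). -/
lemma sum_prod_bool' {V : Type*} [Fintype V] [DecidableEq V] (h : V → Bool → ℝ) :
    ∑ I : V → Bool, ∏ v, h v (I v) = ∏ v, (h v false + h v true) := by
  classical
  have := Finset.prod_univ_sum (fun _ : V => (Finset.univ : Finset Bool)) h
  rw [Fintype.piFinset_univ] at this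
  rw [← this]
  refine Finset.prod_congr rfl fun v _ => ?_
  rw [Fintype.sum_bool, add_comm]

lemma sum_PcondF_eq_one' {V : Type*} [Fintype V] [DecidableEq V] (w : V → ℝ) (x : V) :
    ∑ I : V → Bool, PcondF w x I = 1 := by
  classical
  set h : V → Bool → ℝ := fun v b =>
    if v = x then (if b = false then 1 else 0) else (if b then w v else 1 - w v) with hh
  have key : ∀ I : V → Bool, PcondF w x I = ∏ v, h v (I v) := by
    intro I
    rw [← Finset.mul_prod_erase Finset.univ _ (Finset.mem_univ x)]
    have hcong : ∀ v ∈ Finset.univ.erase x, h v (I v) = (if I v then w v else 1 - w v) := by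
      intro v hv
      simp [hh, Finset.ne_of_mem_erase hv]
    rw [Finset.prod_congr rfl hcong]
    simp only [hh, if_pos rfl, PcondF]
    by_cases hx : I x = false <;> simp [hx]
  simp_rw [key]
  rw [sum_prod_bool']
  have hone : ∀ v ∈ (Finset.univ : Finset V), h v false + h v true = 1 := by
    intro v _
    by_cases hv : v = x <;> simp [hh, hv]
  rw [Finset.prod_congr rfl hone, Finset.prod_const_one]

-- STATEMENT 6: if `φ` has exactly one model `M`, with `M x = true`, and all literal
-- weights of `M` lie in `[t, 1 - t]` for some `0 ≤ t ≤ 1/2`, then the variance of the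
-- single-sample IndeCateR estimator is at most `(1 - t) ^ (card V - 1)`.
open Classical in
theorem indecater_variance_single_model {V : Type*} [Fintype V] [DecidableEq V]
    (φ : (V → Bool) → Prop) (w : V → ℝ) (hw : ∀ v, 0 ≤ w v ∧ w v ≤ 1) (x : V)
    (M : V → Bool) (hM : ∀ I : V → Bool, φ I ↔ I = M) (hMx : M x = true)
    (t : ℝ) (ht0 : 0 ≤ t) (ht2 : t ≤ 1 / 2)
    (htw : ∀ v, t ≤ (if M v then w v else 1 - w v) ∧ (if M v then w v else 1 - w v) ≤ 1 - t) :
    (∑ I₀ : V → Bool, ∑ I₁ : V → Bool,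
        PcondT w x I₀ * PcondF w x I₁ *
          ((if φ I₀ then (1 : ℝ) else 0) - (if φ I₁ then (1 : ℝ) else 0)) ^ 2)
      - (∑ I₀ : V → Bool, ∑ I₁ : V → Bool,
          PcondT w x I₀ * PcondF w x I₁ *
            ((if φ I₀ then (1 : ℝ) else 0) - (if φ I₁ then (1 : ℝ) else 0))) ^ 2
      ≤ (1 - t) ^ (Fintype.card V - 1) := by
  classical
  set p : ℝ := ∏ v ∈ Finset.univ.erase x, (if M v then w v else 1 - w v) with hp
  have hPTM : PcondT w x M = p := by simp [PcondT, hMx, hp]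
  have hPFM : PcondF w x M = 0 := by simp [PcondF, hMx]
  have hSF : ∑ I : V → Bool, PcondF w x I = 1 := sum_PcondF_eq_one' w x
  have hAT : (∑ I₀ : V → Bool, if I₀ = M then PcondT w x I₀ else 0) = p := by
    rw [Finset.sum_ite_eq' Finset.univ M (fun I => PcondT w x I)]
    simp [hPTM]
  have step2 : ∀ I₀ I₁ : V → Bool,
      PcondT w x I₀ * PcondF w x I₁ *
        ((if φ I₀ then (1 : ℝ) else 0) - (if φ I₁ then (1 : ℝ) else 0)) ^ 2
        = (if I₀ = M then PcondT w x I₀ else 0) * PcondF w x I₁ := by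
    intro I₀ I₁
    simp only [hM]
    by_cases h1 : I₁ = M <;> by_cases h0 : I₀ = M <;> simp [h0, h1, hPFM] <;> ring
  have step1 : ∀ I₀ I₁ : V → Bool,
      PcondT w x I₀ * PcondF w x I₁ *
        ((if φ I₀ then (1 : ℝ) else 0) - (if φ I₁ then (1 : ℝ) else 0))
        = (if I₀ = M then PcondT w x I₀ else 0) * PcondF w x I₁ := by
    intro I₀ I₁
    simp only [hM]
    by_cases h1 : I₁ = M <;> by_cases h0 : I₀ = M <;> simp [h0, h1, hPFM] <;> ring
  have h2 : (∑ I₀ : V → Bool, ∑ I₁ : V → Bool,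
      PcondT w x I₀ * PcondF w x I₁ *
        ((if φ I₀ then (1 : ℝ) else 0) - (if φ I₁ then (1 : ℝ) else 0)) ^ 2) = p := by
    simp_rw [step2]
    rw [← Finset.sum_mul_sum, hAT, hSF, mul_one]
  have h1 : (∑ I₀ : V → Bool, ∑ I₁ : V → Bool,
      PcondT w x I₀ * PcondF w x I₁ *
        ((if φ I₀ then (1 : ℝ) else 0) - (if φ I₁ then (1 : ℝ) else 0))) = p := by
    simp_rw [step1]
    rw [← Finset.sum_mul_sum, hAT, hSF, mul_one]
  rw [h2, h1]
  have hple : p ≤ (1 - t) ^ (Fintype.card V - 1) := by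
    have hbound : p ≤ ∏ _v ∈ Finset.univ.erase x, (1 - t) := by
      apply Finset.prod_le_prod
      · intro v _; exact le_trans ht0 (htw v).1
      · intro v _; exact (htw v).2
    rw [Finset.prod_const, Finset.card_erase_of_mem (Finset.mem_univ x),
      Finset.card_univ] at hbound
    exact hbound
  nlinarith [sq_nonneg p]
end

section
/- If σ : V → Option Bool is an implicant of φ whose induced conjunction π contains the positive literal x (i.e. σ x = some true), then WMC(φ ∣ x; w) ≥ WMC(π; w). -/
-- STATEMENT 7: if `σ` is an implicant of `φ` containing the positive literal `x`
-- (i.e. `σ x = some true`), then `WMC(π; w) ≤ WMC(φ ∣ x; w)` where `π` is the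
-- conjunction of literals induced by `σ`.
theorem implicant_wmc_le_wmcpos {V : Type*} [Fintype V] [DecidableEq V]
    (φ : (V → Bool) → Prop) (w : V → ℝ) (hw : ∀ v, 0 ≤ w v ∧ w v ≤ 1) (x : V)
    (σ : V → Option Bool)
    (himp : ∀ I : V → Bool, (∀ v b, σ v = some b → I v = b) → φ I)
    (hσx : σ x = some true) :
    WMC (fun I : V → Bool => ∀ v b, σ v = some b → I v = b) w ≤ WMCpos φ w x := by
  classical
  unfold WMC WMCpos Pw
  apply Finset.sum_le_sum
  intro I _
  have hprod : 0 ≤ ∏ v ∈ Finset.univ.erase x, (if I v then w v else 1 - w v) := by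
    apply Finset.prod_nonneg
    intro v _
    rcases hw v with ⟨h0, h1⟩
    split <;> linarith
  by_cases hπ : ∀ v b, σ v = some b → I v = b
  · have hIx : I x = true := hπ x true hσx
    have hφ : φ I := himp I hπ
    rw [if_pos hπ, if_pos ⟨hφ, hIx⟩]
    have : (∏ v, if I v then w v else 1 - w v)
        = (if I x then w x else 1 - w x) * ∏ v ∈ Finset.univ.erase x, (if I v then w v else 1 - w v) := by
      rw [← Finset.mul_prod_erase Finset.univ _ (Finset.mem_univ x)]
    rw [this, hIx, if_pos rfl]
    nlinarith [(hw x).1, (hw x).2]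
  · rw [if_neg hπ]
    split
    · exact hprod
    · exact le_refl 0
end

section
/- Tractability from a dominating implicant (Theorem 3, core inequality): let σ : V → Option Bool be an implicant of φ with σ x = some true and induced conjunction π, and let c ≥ 0. If WMC(π; w) ≥ WMC(φ ∣ ¬x; w) + c, then the partial derivative of the WMC with respect to the weight of x satisfies WMC(φ ∣ x; w) - WMC(φ ∣ ¬x; w) ≥ c. -/
-- STATEMENT 8: if `σ` is an implicant of `φ` with `σ x = some true` and induced
-- conjunction `π`, `c ≥ 0`, and `WMC(π; w) ≥ WMC(φ ∣ ¬x; w) + c`, then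
-- `WMC(φ ∣ x; w) - WMC(φ ∣ ¬x; w) ≥ c`.
theorem dominating_implicant_derivative_ge {V : Type*} [Fintype V] [DecidableEq V]
    (φ : (V → Bool) → Prop) (w : V → ℝ) (hw : ∀ v, 0 ≤ w v ∧ w v ≤ 1) (x : V)
    (σ : V → Option Bool)
    (himp : ∀ I : V → Bool, (∀ v b, σ v = some b → I v = b) → φ I)
    (hσx : σ x = some true)
    (c : ℝ) (hc : 0 ≤ c)
    (hdom : WMC (fun I : V → Bool => ∀ v b, σ v = some b → I v = b) w ≥ WMCneg φ w x + c) :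
    WMCpos φ w x - WMCneg φ w x ≥ c := by
  have key : WMC (fun I : V → Bool => ∀ v b, σ v = some b → I v = b) w ≤ WMCpos φ w x := by
    classical
    apply Finset.sum_le_sum
    intro I _
    by_cases hπ : ∀ v b, σ v = some b → I v = b
    · have hφ : φ I := himp I hπ
      have hIx : I x = true := hπ x true hσx
      have hprod : (0:ℝ) ≤ ∏ v ∈ Finset.univ.erase x, (if I v then w v else 1 - w v) := by
        apply Finset.prod_nonneg
        intro v _
        rcases hw v with ⟨h0, h1⟩
        split <;> linarith
      rw [if_pos hπ, if_pos (show φ I ∧ I x = true from ⟨hφ, hIx⟩), Pw, ← Finset.mul_prod_erase Finset.univ _ (Finset.mem_univ x), hIx, if_pos rfl]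
      calc w x * ∏ v ∈ Finset.univ.erase x, (if I v then w v else 1 - w v)
          ≤ 1 * ∏ v ∈ Finset.univ.erase x, (if I v then w v else 1 - w v) := by
            apply mul_le_mul_of_nonneg_right (hw x).2 hprod
        _ = _ := one_mul _
    · simp only [hπ, if_false]
      split
      · apply Finset.prod_nonneg
        intro v _
        rcases hw v with ⟨h0, h1⟩
        split <;> linarith
      · exact le_refl 0
  linarith
end

section
/- PAC guarantee for sampling a dominated derivative (Theorem 3, quantitative form): let y = WMC(φ ∣ x; w) - WMC(φ ∣ ¬x; w) and assume y ≥ c for some c > 0. Fix ε, δ ∈ (0, 1) and a number of samples s ≥ 1. Let μ be the probability distribution of s i.i.d. pairs (I₀ⁱ, I₁ⁱ) with I₀ⁱ ∼ P(· ∣ x; w) and I₁ⁱ ∼ P(· ∣ ¬x; w) all independent, and let Ŷ = (1/s) ∑_{i=1}^{s} ((if φ I₀ⁱ then 1 else 0) - (if φ I₁ⁱ then 1 else 0)). If s ≥ (2 / (ε² c²)) · log(2/δ), then μ{ |Ŷ - y| > ε · y } ≤ δ. -/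
/-! ### Auxiliary lemmas for the PAC bound -/

section Aux

open Finset

/-- Sum over boolean assignments of a product factorizes. -/
lemma sum_fun_bool {V : Type*} [Fintype V] [DecidableEq V] (g : V → Bool → ℝ) :
    ∑ I : V → Bool, ∏ v, g v (I v) = ∏ v, (g v true + g v false) := by
  have := Finset.prod_univ_sum (fun _ : V => (Finset.univ : Finset Bool)) (fun v b => g v b)
  rw [Fintype.piFinset_univ] at this
  rw [← this]
  simp

open Classical in
lemma sum_cond {V : Type*} [Fintype V] [DecidableEq V] (w : V → ℝ) (x : V) (bx : Bool) :
    ∑ I : V → Bool,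
      (if I x = bx then ∏ v ∈ Finset.univ.erase x, (if I v then w v else 1 - w v) else 0) = 1 := by
  set g : V → Bool → ℝ := fun v b =>
    if v = x then (if b = bx then 1 else 0) else (if b then w v else 1 - w v) with hg
  have hpt : ∀ I : V → Bool,
      (if I x = bx then ∏ v ∈ Finset.univ.erase x, (if I v then w v else 1 - w v) else 0)
        = ∏ v, g v (I v) := by
    intro I
    rw [← Finset.mul_prod_erase Finset.univ (fun v => g v (I v)) (Finset.mem_univ x)]
    have h1 : g x (I x) = if I x = bx then 1 else 0 := by simp [hg]
    have h2 : ∏ v ∈ Finset.univ.erase x, g v (I v)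
        = ∏ v ∈ Finset.univ.erase x, (if I v then w v else 1 - w v) := by
      refine Finset.prod_congr rfl fun v hv => ?_
      have : v ≠ x := Finset.ne_of_mem_erase hv
      simp [hg, this]
    rw [h1, h2]
    split_ifs with h
    · rw [one_mul]
    · rw [zero_mul]
  rw [Finset.sum_congr rfl fun I _ => hpt I, sum_fun_bool]
  refine Finset.prod_eq_one fun v _ => ?_
  by_cases h : v = x
  · cases bx <;> simp [hg, h]
  · simp only [hg, if_neg h]
    norm_num

/-- Quadratic upper bound for the exponential on `[-1,1]`. -/
lemma exp_quad {z : ℝ} (hz : |z| ≤ 1) : Real.exp z ≤ 1 + z + (3/4) * z ^ 2 := by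
  have h := Real.exp_bound hz (by norm_num : 0 < 2)
  have h2 : |Real.exp z - (1 + z)| ≤ |z| ^ 2 * (3 / 4) := by
    convert h using 2
    · rw [Finset.sum_range_succ, Finset.sum_range_succ]
      norm_num
    · norm_num
  have := abs_le.mp h2
  nlinarith [sq_abs z, this.2]

/-- Mgf bound for a centered `{0,1}`-valued variable. -/
lemma bernoulli_mgf {κ : Type*} [Fintype κ] (p : κ → ℝ) (hp : ∀ i, 0 ≤ p i)
    (hsum : ∑ i, p i = 1) (A : κ → ℝ) (hA : ∀ i, A i = 0 ∨ A i = 1) (a : ℝ)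
    (ha : ∑ i, p i * A i = a) (u : ℝ) (hu : |u| ≤ 1) :
    ∑ i, p i * Real.exp (u * (A i - a)) ≤ Real.exp (3/16 * u ^ 2) := by
  have ha0 : 0 ≤ a := by
    rw [← ha]
    exact Finset.sum_nonneg fun i _ =>
      mul_nonneg (hp i) (by rcases hA i with h | h <;> simp [h])
  have ha1 : a ≤ 1 := by
    rw [← ha, ← hsum]
    exact Finset.sum_le_sum fun i _ => by
      rcases hA i with h | h <;> simp [h, hp i]
  have hsq : ∀ i, (A i) ^ 2 = A i := fun i => by rcases hA i with h | h <;> simp [h]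
  have key : ∀ i, p i * Real.exp (u * (A i - a)) ≤
      p i * (1 + u * (A i - a) + (3/4) * (u * (A i - a)) ^ 2) := by
    intro i
    refine mul_le_mul_of_nonneg_left (exp_quad ?_) (hp i)
    rw [abs_mul]
    have h1 : |A i - a| ≤ 1 := by
      rw [abs_le]; rcases hA i with h | h <;> constructor <;> simp [h] <;> linarith
    calc |u| * |A i - a| ≤ 1 * 1 := mul_le_mul hu h1 (abs_nonneg _) (by norm_num)
      _ = 1 := by norm_num
  calc ∑ i, p i * Real.exp (u * (A i - a))
      ≤ ∑ i, p i * (1 + u * (A i - a) + (3/4) * (u * (A i - a)) ^ 2) :=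
        Finset.sum_le_sum fun i _ => key i
    _ = 1 + (3/4) * u ^ 2 * (a * (1 - a)) := by
        have e1 : ∑ i, p i * A i ^ 2 = a := by
          rw [← ha]; exact Finset.sum_congr rfl fun i _ => by rw [hsq i]
        have : ∀ i, p i * (1 + u * (A i - a) + (3/4) * (u * (A i - a)) ^ 2)
            = p i + u * (p i * A i - p i * a)
              + (3/4) * u ^ 2 * (p i * A i ^ 2 - 2 * a * (p i * A i) + a ^ 2 * p i) := by
          intro i; ring
        rw [Finset.sum_congr rfl fun i _ => this i]
        rw [Finset.sum_add_distrib, Finset.sum_add_distrib, ← Finset.mul_sum,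
          ← Finset.mul_sum, Finset.sum_sub_distrib, Finset.sum_add_distrib,
          Finset.sum_sub_distrib, ← Finset.mul_sum, ← Finset.mul_sum]
        have e2 : ∑ i : κ, p i * a = a := by
          rw [← Finset.sum_mul, hsum, one_mul]
        rw [hsum, ha, e1, e2]
        ring
    _ ≤ 1 + 3/16 * u ^ 2 := by nlinarith [sq_nonneg u, sq_nonneg (2*a - 1)]
    _ ≤ Real.exp (3/16 * u ^ 2) := by
        have := Real.add_one_le_exp (3/16 * u ^ 2)
        linarith

/-- One-sided Chernoff step over the finite product space. -/
lemma chernoff_side {Ω : Type*} [Fintype Ω] (p : Ω → ℝ) (hp : ∀ ω, 0 ≤ p ω)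
    (X : Ω → ℝ) (s : ℕ) (t r M : ℝ) (ht : 0 < t)
    (hmgf : ∑ ω, p ω * Real.exp (t * X ω) ≤ Real.exp M)
    [DecidablePred fun f : Fin s → Ω => (∑ i, X (f i)) > r] :
    (∑ f : Fin s → Ω, if (∑ i, X (f i)) > r then ∏ i, p (f i) else 0)
      ≤ Real.exp (s * M - t * r) := by
  have step1 : ∀ f : Fin s → Ω,
      (if (∑ i, X (f i)) > r then ∏ i, p (f i) else 0)
        ≤ Real.exp (-(t * r)) * ∏ i, p (f i) * Real.exp (t * X (f i)) := by
    intro f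
    have hprod : ∏ i, p (f i) * Real.exp (t * X (f i))
        = (∏ i, p (f i)) * Real.exp (t * ∑ i, X (f i)) := by
      rw [Finset.prod_mul_distrib, ← Real.exp_sum, Finset.mul_sum]
    rw [hprod]
    split_ifs with h
    · have h1 : (1 : ℝ) ≤ Real.exp (-(t * r)) * Real.exp (t * ∑ i, X (f i)) := by
        rw [← Real.exp_add]
        refine Real.one_le_exp ?_
        have : t * r ≤ t * ∑ i, X (f i) :=
          mul_le_mul_of_nonneg_left (le_of_lt h) (le_of_lt ht)
        linarith
      have hP : 0 ≤ ∏ i, p (f i) := Finset.prod_nonneg fun i _ => hp (f i)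
      calc ∏ i, p (f i) = 1 * ∏ i, p (f i) := by ring
        _ ≤ (Real.exp (-(t * r)) * Real.exp (t * ∑ i, X (f i))) * ∏ i, p (f i) :=
            mul_le_mul_of_nonneg_right h1 hP
        _ = Real.exp (-(t * r)) * ((∏ i, p (f i)) * Real.exp (t * ∑ i, X (f i))) := by ring
    · exact mul_nonneg (Real.exp_nonneg _)
        (mul_nonneg (Finset.prod_nonneg fun i _ => hp (f i)) (Real.exp_nonneg _))
  calc (∑ f : Fin s → Ω, if (∑ i, X (f i)) > r then ∏ i, p (f i) else 0)
      ≤ ∑ f : Fin s → Ω, Real.exp (-(t * r)) * ∏ i, p (f i) * Real.exp (t * X (f i)) :=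
        Finset.sum_le_sum fun f _ => step1 f
    _ = Real.exp (-(t * r)) * ∑ f : Fin s → Ω, ∏ i, p (f i) * Real.exp (t * X (f i)) := by
        rw [Finset.mul_sum]
    _ = Real.exp (-(t * r)) * (∑ ω, p ω * Real.exp (t * X ω)) ^ s := by
        rw [Fintype.sum_pow]
    _ ≤ Real.exp (-(t * r)) * (Real.exp M) ^ s := by
        refine mul_le_mul_of_nonneg_left ?_ (Real.exp_nonneg _)
        refine pow_le_pow_left₀ ?_ hmgf s
        exact Finset.sum_nonneg fun ω _ => mul_nonneg (hp ω) (Real.exp_nonneg _)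
    _ = Real.exp (s * M - t * r) := by
        rw [← Real.exp_nat_mul, ← Real.exp_add]
        ring_nf

/-- Indicator splitting for a union of events. -/
lemma ite_le_ite_add_ite {C Q R : Prop} [Decidable C] [Decidable Q] [Decidable R] {W : ℝ}
    (hW : 0 ≤ W) (h : C → Q ∨ R) :
    (if C then W else 0) ≤ (if Q then W else 0) + (if R then W else 0) := by
  by_cases h1 : C
  · rw [if_pos h1]
    rcases h h1 with hh | hh
    · rw [if_pos hh]
      have : (0:ℝ) ≤ if R then W else 0 := by split_ifs <;> simp [hW]
      linarith
    · rw [if_pos hh]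
      have : (0:ℝ) ≤ if Q then W else 0 := by split_ifs <;> simp [hW]
      linarith
  · rw [if_neg h1]
    have hq : (0:ℝ) ≤ if Q then W else 0 := by split_ifs <;> simp [hW]
    have hr : (0:ℝ) ≤ if R then W else 0 := by split_ifs <;> simp [hW]
    linarith

end Aux

-- STATEMENT 9: PAC guarantee for interpretation sampling of the derivative
-- `y = WMC(φ ∣ x; w) - WMC(φ ∣ ¬x; w) ≥ c > 0`: with
-- `s ≥ (2 / (ε² c²)) · log(2/δ)` i.i.d. sample pairs `(I₀ⁱ, I₁ⁱ)` with
-- `I₀ⁱ ∼ P(· ∣ x; w)`, `I₁ⁱ ∼ P(· ∣ ¬x; w)`, the sample mean `Ŷ` satisfies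
-- `μ{ |Ŷ - y| > ε·y } ≤ δ`.
set_option maxHeartbeats 1000000 in
open Classical in
theorem pac_interpretation_sampling {V : Type*} [Fintype V] [DecidableEq V]
    (φ : (V → Bool) → Prop) (w : V → ℝ) (hw : ∀ v, 0 ≤ w v ∧ w v ≤ 1) (x : V)
    (y c ε δ : ℝ)
    (hy : y = WMCpos φ w x - WMCneg φ w x)
    (hc : 0 < c) (hyc : y ≥ c)
    (hε : 0 < ε ∧ ε < 1) (hδ : 0 < δ ∧ δ < 1)
    (s : ℕ) (hs : 1 ≤ s)
    (hsc : (s : ℝ) ≥ (2 / (ε ^ 2 * c ^ 2)) * Real.log (2 / δ)) :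
    (∑ f : Fin s → ((V → Bool) × (V → Bool)),
      if |(∑ i, ((if φ (f i).1 then (1 : ℝ) else 0) - (if φ (f i).2 then (1 : ℝ) else 0))) / s
            - y| > ε * y
      then ∏ i, PcondT w x (f i).1 * PcondF w x (f i).2 else 0) ≤ δ := by
  obtain ⟨hε0, hε1⟩ := hε
  obtain ⟨hδ0, hδ1⟩ := hδ
  have hy0 : 0 < y := lt_of_lt_of_le hc hyc
  -- basic facts about the conditional distributions
  have hfac : ∀ (I : V → Bool) (v : V), 0 ≤ (if I v then w v else 1 - w v) := by
    intro I v; split_ifs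
    · exact (hw v).1
    · linarith [(hw v).2]
  have hp1nn : ∀ I, 0 ≤ PcondT w x I := by
    intro I; unfold PcondT; split_ifs
    · exact Finset.prod_nonneg fun v _ => hfac I v
    · exact le_refl 0
  have hp2nn : ∀ I, 0 ≤ PcondF w x I := by
    intro I; unfold PcondF; split_ifs
    · exact Finset.prod_nonneg fun v _ => hfac I v
    · exact le_refl 0
  have hp1sum : ∑ I : V → Bool, PcondT w x I = 1 := by
    have := sum_cond w x true
    rw [← this]; rfl
  have hp2sum : ∑ I : V → Bool, PcondF w x I = 1 := by
    have := sum_cond w x false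
    rw [← this]; rfl
  -- the Bernoulli random variable
  set A : (V → Bool) → ℝ := fun I => if φ I then (1 : ℝ) else 0 with hAdef
  have hA01 : ∀ I, A I = 0 ∨ A I = 1 := by
    intro I; by_cases h : φ I <;> simp [hAdef, h]
  have hα : ∑ I : V → Bool, PcondT w x I * A I = WMCpos φ w x := by
    unfold WMCpos PcondT
    refine Finset.sum_congr rfl fun I _ => ?_
    by_cases hφ : φ I <;> by_cases hx : I x = true <;> simp [hAdef, hφ, hx]
  have hβ : ∑ I : V → Bool, PcondF w x I * A I = WMCneg φ w x := by
    unfold WMCneg PcondF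
    refine Finset.sum_congr rfl fun I _ => ?_
    by_cases hφ : φ I <;> by_cases hx : I x = false <;> simp [hAdef, hφ, hx]
  set α : ℝ := WMCpos φ w x with hαdef
  set β : ℝ := WMCneg φ w x with hβdef
  have hα1 : α ≤ 1 := by
    rw [← hα, ← hp1sum]
    refine Finset.sum_le_sum fun I _ => ?_
    rcases hA01 I with h | h <;> simp [h, hp1nn I]
  have hβ0 : 0 ≤ β := by
    rw [← hβ]
    exact Finset.sum_nonneg fun I _ =>
      mul_nonneg (hp2nn I) (by rcases hA01 I with h | h <;> simp [h])
  have hy1 : y ≤ 1 := by rw [hy]; linarith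
  set t : ℝ := ε * y with htdef
  have ht0 : 0 < t := mul_pos hε0 hy0
  have ht1 : t ≤ 1 := by nlinarith
  have htabs : |t| ≤ 1 := by rw [abs_of_pos ht0]; exact ht1
  -- the product distribution and centered variable
  set p : ((V → Bool) × (V → Bool)) → ℝ := fun ω => PcondT w x ω.1 * PcondF w x ω.2 with hpdef
  have hpnn : ∀ ω, 0 ≤ p ω := fun ω => mul_nonneg (hp1nn ω.1) (hp2nn ω.2)
  set X : ((V → Bool) × (V → Bool)) → ℝ := fun ω => A ω.1 - A ω.2 - y with hXdef
  -- mgf bound for the pair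
  have hmgf : ∀ u : ℝ, |u| ≤ 1 →
      ∑ ω : ((V → Bool) × (V → Bool)), p ω * Real.exp (u * X ω)
        ≤ Real.exp (3/8 * u ^ 2) := by
    intro u hu
    have h1 := bernoulli_mgf (PcondT w x) hp1nn hp1sum A hA01 α hα u hu
    have h2 := bernoulli_mgf (PcondF w x) hp2nn hp2sum A hA01 β hβ (-u) (by rwa [abs_neg])
    have key : ∑ ω : ((V → Bool) × (V → Bool)), p ω * Real.exp (u * X ω)
        = (∑ I : V → Bool, PcondT w x I * Real.exp (u * (A I - α)))
          * (∑ J : V → Bool, PcondF w x J * Real.exp (-u * (A J - β))) := by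
      rw [Finset.sum_mul_sum, Fintype.sum_prod_type]
      refine Finset.sum_congr rfl fun I _ => Finset.sum_congr rfl fun J _ => ?_
      have hXe : u * X (I, J) = u * (A I - α) + (-u * (A J - β)) := by
        have : X (I, J) = A I - A J - y := rfl
        rw [this, hy]
        ring
      rw [hXe, Real.exp_add]
      show p (I, J) * _ = _
      rw [hpdef]
      ring
    rw [key]
    have hnn2 : 0 ≤ ∑ J : V → Bool, PcondF w x J * Real.exp (-u * (A J - β)) :=
      Finset.sum_nonneg fun J _ => mul_nonneg (hp2nn J) (Real.exp_nonneg _)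
    calc (∑ I : V → Bool, PcondT w x I * Real.exp (u * (A I - α)))
          * (∑ J : V → Bool, PcondF w x J * Real.exp (-u * (A J - β)))
        ≤ Real.exp (3/16 * u ^ 2) * Real.exp (3/16 * (-u) ^ 2) := by
          refine mul_le_mul h1 ?_ hnn2 (Real.exp_nonneg _)
          convert h2 using 3
      _ = Real.exp (3/8 * u ^ 2) := by
          rw [← Real.exp_add]; ring_nf
  -- rewrite the deviation event
  have hs0 : (0 : ℝ) < s := by exact_mod_cast Nat.lt_of_lt_of_le Nat.zero_lt_one hs
  have hcond : ∀ f : Fin s → ((V → Bool) × (V → Bool)),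
      (|(∑ i, ((if φ (f i).1 then (1 : ℝ) else 0) - (if φ (f i).2 then (1 : ℝ) else 0))) / s
          - y| > ε * y)
        ↔ ((∑ i, X (f i)) > (s : ℝ) * t ∨ (∑ i, -X (f i)) > (s : ℝ) * t) := by
    intro f
    have hS : ∑ i, X (f i)
        = (∑ i, ((if φ (f i).1 then (1 : ℝ) else 0) - (if φ (f i).2 then (1 : ℝ) else 0)))
          - s * y := by
      have he : ∀ i : Fin s, X (f i)
          = ((if φ (f i).1 then (1 : ℝ) else 0) - (if φ (f i).2 then (1 : ℝ) else 0)) - y :=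
        fun i => rfl
      rw [Finset.sum_congr rfl fun i _ => he i, Finset.sum_sub_distrib,
        Finset.sum_const, Finset.card_univ, Fintype.card_fin, nsmul_eq_mul]
    have hq : (∑ i, ((if φ (f i).1 then (1 : ℝ) else 0) - (if φ (f i).2 then (1 : ℝ) else 0))) / s
        - y = (∑ i, X (f i)) / s := by
      rw [hS]
      field_simp
    rw [hq, Finset.sum_neg_distrib, htdef, mul_comm (s : ℝ) (ε * y), gt_iff_lt,
      abs_div, abs_of_pos hs0, lt_div_iff₀ hs0]
    exact lt_abs
  -- split the two-sided event into two one-sided events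
  have hsplit : (∑ f : Fin s → ((V → Bool) × (V → Bool)),
      if |(∑ i, ((if φ (f i).1 then (1 : ℝ) else 0) - (if φ (f i).2 then (1 : ℝ) else 0))) / s
            - y| > ε * y
      then ∏ i, PcondT w x (f i).1 * PcondF w x (f i).2 else 0)
      ≤ (∑ f : Fin s → ((V → Bool) × (V → Bool)),
          if (∑ i, X (f i)) > (s : ℝ) * t then ∏ i, p (f i) else 0)
        + (∑ f : Fin s → ((V → Bool) × (V → Bool)),
          if (∑ i, -X (f i)) > (s : ℝ) * t then ∏ i, p (f i) else 0) := by
    rw [← Finset.sum_add_distrib]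
    refine Finset.sum_le_sum fun f _ => ?_
    have hW : (∏ i, PcondT w x (f i).1 * PcondF w x (f i).2) = ∏ i, p (f i) := rfl
    rw [hW]
    have hPf : 0 ≤ ∏ i, p (f i) := Finset.prod_nonneg fun i _ => hpnn (f i)
    exact ite_le_ite_add_ite hPf (hcond f).mp
  -- Chernoff bounds for the two sides
  have c1 := chernoff_side p hpnn X s t ((s : ℝ) * t) (3/8 * t ^ 2) ht0 (hmgf t htabs)
  have hmgf2 : ∑ ω : ((V → Bool) × (V → Bool)), p ω * Real.exp (t * (-X ω))
      ≤ Real.exp (3/8 * t ^ 2) := by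
    have h := hmgf (-t) (by rwa [abs_neg])
    calc ∑ ω : ((V → Bool) × (V → Bool)), p ω * Real.exp (t * (-X ω))
        = ∑ ω : ((V → Bool) × (V → Bool)), p ω * Real.exp ((-t) * X ω) := by
          refine Finset.sum_congr rfl fun ω _ => ?_
          ring_nf
      _ ≤ Real.exp (3/8 * (-t) ^ 2) := h
      _ = Real.exp (3/8 * t ^ 2) := by ring_nf
  have c2 : (∑ f : Fin s → ((V → Bool) × (V → Bool)),
      if (∑ i, -X (f i)) > (s : ℝ) * t then ∏ i, p (f i) else 0)
      ≤ Real.exp ((s : ℝ) * (3/8 * t ^ 2) - t * ((s : ℝ) * t)) :=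
    chernoff_side p hpnn (fun ω => -X ω) s t ((s : ℝ) * t) (3/8 * t ^ 2) ht0 hmgf2
  -- numeric conclusion
  have hfinal : Real.exp ((s : ℝ) * (3/8 * t ^ 2) - t * ((s : ℝ) * t)) ≤ δ / 2 := by
    have hL0 : 0 ≤ Real.log (2 / δ) := Real.log_nonneg (by rw [le_div_iff₀ hδ0]; linarith)
    have hpos : 0 < ε ^ 2 * c ^ 2 := by positivity
    have hst : 2 * Real.log (2 / δ) ≤ (s : ℝ) * (ε ^ 2 * c ^ 2) := by
      rw [ge_iff_le, div_mul_eq_mul_div, div_le_iff₀ hpos] at hsc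
      exact hsc
    have htec : ε * c ≤ t := by
      rw [htdef]
      exact mul_le_mul_of_nonneg_left hyc (le_of_lt hε0)
    have ht2 : ε ^ 2 * c ^ 2 ≤ t ^ 2 := by nlinarith [mul_pos hε0 hc]
    have hst2 : 2 * Real.log (2 / δ) ≤ (s : ℝ) * t ^ 2 := by
      have h := mul_le_mul_of_nonneg_left ht2 (le_of_lt hs0)
      linarith
    have harg : (s : ℝ) * (3/8 * t ^ 2) - t * ((s : ℝ) * t) ≤ -Real.log (2 / δ) := by
      nlinarith [hst2, hL0]
    calc Real.exp ((s : ℝ) * (3/8 * t ^ 2) - t * ((s : ℝ) * t))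
        ≤ Real.exp (-Real.log (2 / δ)) := Real.exp_le_exp.mpr harg
      _ = δ / 2 := by
          rw [Real.exp_neg, Real.exp_log (by positivity), inv_div]
  calc (∑ f : Fin s → ((V → Bool) × (V → Bool)),
      if |(∑ i, ((if φ (f i).1 then (1 : ℝ) else 0) - (if φ (f i).2 then (1 : ℝ) else 0))) / s
            - y| > ε * y
      then ∏ i, PcondT w x (f i).1 * PcondF w x (f i).2 else 0)
      ≤ _ + _ := hsplit
    _ ≤ δ / 2 + δ / 2 := add_le_add (le_trans c1 hfinal) (le_trans c2 hfinal)
    _ = δ := by ring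
end

section
/- Necessary supervision level for a large derivative (Theorem 4, core inequality): suppose φ has exactly one model M with M x = true and w x > 0, and suppose the partial derivative satisfies WMC(φ ∣ x; w) ≥ c for some c > 0. Let τ = card { v : V | (if M v then w v else 1 - w v) > 1/2 }. Then card V + Real.logb 2 (w x · c) ≤ τ. -/
-- STATEMENT 12: necessary supervision level for a large derivative: if `φ` has exactly
-- one model `M` with `M x = true`, `w x > 0`, and `WMC(φ ∣ x; w) ≥ c` with `c > 0`, then
-- `card V + log₂(w x · c) ≤ τ` where `τ` counts the variables whose literal in `M` has
-- weight exceeding 1/2.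
open Classical in
theorem necessary_supervision_level {V : Type*} [Fintype V] [DecidableEq V]
    (φ : (V → Bool) → Prop) (w : V → ℝ) (hw : ∀ v, 0 ≤ w v ∧ w v ≤ 1) (x : V)
    (M : V → Bool) (hM : ∀ I : V → Bool, φ I ↔ I = M) (hMx : M x = true)
    (hwx : 0 < w x)
    (c : ℝ) (hc : 0 < c) (hderiv : WMCpos φ w x ≥ c)
    (τ : ℕ)
    (hτ : τ = (Finset.univ.filter
      (fun v : V => (if M v then w v else 1 - w v) > 1 / 2)).card) :
    (Fintype.card V : ℝ) + Real.logb 2 (w x * c) ≤ (τ : ℝ) := by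
  unfold WMCpos at hderiv
  set lit : V → ℝ := fun v => if M v then w v else 1 - w v with hlit
  have hlit0 : ∀ v, 0 ≤ lit v := by
    intro v; by_cases h : M v <;> simp [hlit, h, (hw v).1, (hw v).2]
  -- WMCpos equals product over erase
  have hsum : (∑ I : V → Bool, if φ I ∧ I x = true then
      ∏ v ∈ Finset.univ.erase x, (if I v then w v else 1 - w v) else 0)
      = ∏ v ∈ Finset.univ.erase x, lit v := by
    rw [Finset.sum_eq_single M]
    · simp [hM, hMx, hlit]
    · intro I _ hIM
      have : ¬ (φ I ∧ I x = true) := by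
        rintro ⟨h1, _⟩; exact hIM ((hM I).1 h1)
      simp [this]
    · simp
  rw [hsum] at hderiv
  have hP : w x * c ≤ ∏ v, lit v := by
    have := Finset.mul_prod_erase Finset.univ lit (Finset.mem_univ x)
    rw [← this]
    have hlx : lit x = w x := by simp [hlit, hMx]
    rw [hlx]
    exact mul_le_mul_of_nonneg_left hderiv hwx.le
  set S := Finset.univ.filter (fun v : V => lit v > 1 / 2) with hS
  have hbound : (∏ v, lit v) ≤ (1/2 : ℝ) ^ (Fintype.card V - τ) := by
    calc (∏ v, lit v) ≤ ∏ v, (if lit v > 1/2 then (1:ℝ) else 1/2) := by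
          apply Finset.prod_le_prod (fun v _ => hlit0 v)
          intro v _
          by_cases h : lit v > 1/2
          · simp only [h, if_true]
            by_cases hm : M v <;> simp [hlit, hm] <;> linarith [(hw v).2, (hw v).1]
          · simp only [h, if_false]; linarith [not_lt.mp h]
      _ = (1/2 : ℝ) ^ (Fintype.card V - τ) := by
          rw [Finset.prod_ite, Finset.prod_const, Finset.prod_const, one_pow, one_mul]
          congr 1
          have := Finset.card_filter_add_card_filter_not
            (s := (Finset.univ : Finset V)) (p := fun v => lit v > 1/2)
          rw [Finset.card_univ] at this
          have hτ2 : τ = (Finset.univ.filter (fun v => lit v > 1/2)).card := hτ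
          omega
  have hτle : τ ≤ Fintype.card V := by
    rw [hτ]; exact (Finset.card_filter_le _ _).trans (by simp)
  have hposwc : 0 < w x * c := mul_pos hwx hc
  have hpow : (0:ℝ) < (1/2 : ℝ) ^ (Fintype.card V - τ) := by positivity
  have hlog : Real.logb 2 (w x * c) ≤ Real.logb 2 ((1/2 : ℝ) ^ (Fintype.card V - τ)) :=
    (Real.logb_le_logb one_lt_two hposwc hpow).mpr (le_trans hP hbound)
  have hval : Real.logb 2 ((1/2:ℝ)^(Fintype.card V - τ)) = -((Fintype.card V - τ : ℕ):ℝ) := by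
    rw [Real.logb_pow]
    rw [show (1/2:ℝ) = 2⁻¹ by norm_num, Real.logb_inv, Real.logb_self_eq_one] <;> norm_num
  rw [hval] at hlog
  have : ((Fintype.card V - τ : ℕ):ℝ) = (Fintype.card V : ℝ) - τ := by
    push_cast [Nat.cast_sub hτle]; ring
  rw [this] at hlog
  linarith
end

section
/- WeightME is unbiased (Theorem 5): fix a variable x with 0 < w x < 1 and suppose WMC(φ; w) > 0. Then ∑_{M : V → Bool, φ M} (P(M; w) / WMC(φ; w)) · X(M) = (WMC(φ ∣ x; w) - WMC(φ ∣ ¬x; w)) / WMC(φ; w), where X(M) = 1 / (w x) if M x = true and X(M) = -1 / (1 - w x) if M x = false; moreover this common value is the derivative at w x of the function t ↦ Real.log (WMC(φ; Function.update w x t)). -/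
open Classical in
lemma WMC_affine {V : Type*} [Fintype V] [DecidableEq V]
    (φ : (V → Bool) → Prop) (w : V → ℝ) (x : V) (t : ℝ) :
    WMC φ (Function.update w x t)
      = t * WMCpos φ w x + (1 - t) * WMCneg φ w x := by
  unfold WMC WMCpos WMCneg Pw
  rw [Finset.mul_sum, Finset.mul_sum, ← Finset.sum_add_distrib]
  refine Finset.sum_congr rfl fun I _ => ?_
  by_cases h : φ I
  · have hprod : (∏ v, (if I v then Function.update w x t v else 1 - Function.update w x t v))
        = (if I x then t else 1 - t) * ∏ v ∈ Finset.univ.erase x, (if I v then w v else 1 - w v) := by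
      rw [← Finset.mul_prod_erase _ _ (Finset.mem_univ x)]
      congr 1
      · simp
      · refine Finset.prod_congr rfl fun v hv => ?_
        rw [Function.update_of_ne (Finset.ne_of_mem_erase hv)]
    simp only [h, true_and, if_true]
    rw [hprod]
    cases hIx : I x <;> simp [hIx] <;> ring
  · simp [h]

open Classical in
theorem weightme_unbiased {V : Type*} [Fintype V] [DecidableEq V]
    (φ : (V → Bool) → Prop) (w : V → ℝ) (hw : ∀ v, 0 ≤ w v ∧ w v ≤ 1) (x : V)
    (hx : 0 < w x ∧ w x < 1) (hWMC : 0 < WMC φ w) :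
    (∑ M : V → Bool, if φ M then
        (Pw w M / WMC φ w) * (if M x = true then 1 / w x else -(1 / (1 - w x))) else 0)
      = (WMCpos φ w x - WMCneg φ w x) / WMC φ w ∧
    HasDerivAt (fun t => Real.log (WMC φ (Function.update w x t)))
      ((WMCpos φ w x - WMCneg φ w x) / WMC φ w) (w x) := by
  have hx0 : (w x) ≠ 0 := ne_of_gt hx.1
  have hx1 : (1 - w x) ≠ 0 := by linarith [hx.2]
  have hW0 : WMC φ w ≠ 0 := ne_of_gt hWMC
  constructor
  · unfold WMCpos WMCneg Pw
    rw [sub_div, Finset.sum_div, Finset.sum_div, ← Finset.sum_sub_distrib]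
    refine Finset.sum_congr rfl fun M _ => ?_
    by_cases h : φ M
    · have hprod : (∏ v, (if M v then w v else 1 - w v))
          = (if M x then w x else 1 - w x) * ∏ v ∈ Finset.univ.erase x, (if M v then w v else 1 - w v) := by
        rw [← Finset.mul_prod_erase _ _ (Finset.mem_univ x)]
      simp only [h, true_and, if_true]
      rw [hprod]
      cases hMx : M x <;> simp [hMx] <;> field_simp <;> ring
    · simp [h]
  · set A := WMCpos φ w x
    set B := WMCneg φ w x
    have key : ∀ t, WMC φ (Function.update w x t) = t * A + (1 - t) * B :=
      fun t => WMC_affine φ w x t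
    have hWval : WMC φ w = w x * A + (1 - w x) * B := by
      have := key (w x); rwa [Function.update_eq_self] at this
    have hinner : HasDerivAt (fun t : ℝ => t * A + (1 - t) * B) (A - B) (w x) := by
      have h1 : HasDerivAt (fun t : ℝ => t * A) A (w x) := by
        simpa using (hasDerivAt_id (w x)).mul_const A
      have h2 : HasDerivAt (fun t : ℝ => (1 - t) * B) (-B) (w x) := by
        simpa using ((hasDerivAt_const (w x) (1:ℝ)).sub (hasDerivAt_id (w x))).mul_const B
      exact (h1.add h2).congr_deriv (by ring)
    have hne : w x * A + (1 - w x) * B ≠ 0 := by rw [← hWval]; exact hW0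
    have := hinner.log hne
    have hfun : (fun t => Real.log (WMC φ (Function.update w x t)))
        = fun t => Real.log (t * A + (1 - t) * B) := funext fun t => by rw [key t]
    rw [hfun, ← hWval] at *
    simpa [hWval] using this
end

section
/- Derivative in terms of the model-marginal of x (key identity of Theorem 6): fix a variable x with 0 < w x < 1 and suppose WMC(φ; w) > 0. Let q = WMC(φ ∧ x; w) / WMC(φ; w), where WMC(φ ∧ x; w) = ∑_{I : φ I ∧ I x = true} P(I; w). Then WMC(φ ∣ x; w) - WMC(φ ∣ ¬x; w) = (WMC(φ; w) / (1 - w x)) · (q / (w x) - 1). -/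
-- STATEMENT 14: derivative in terms of the model-marginal of `x`: with
-- `q = WMC(φ ∧ x; w) / WMC(φ; w)`, one has
-- `WMC(φ ∣ x; w) - WMC(φ ∣ ¬x; w) = (WMC(φ; w) / (1 - w x)) · (q / w x - 1)`.
open Classical in
theorem derivative_via_model_marginal {V : Type*} [Fintype V] [DecidableEq V]
    (φ : (V → Bool) → Prop) (w : V → ℝ) (hw : ∀ v, 0 ≤ w v ∧ w v ≤ 1) (x : V)
    (hx : 0 < w x ∧ w x < 1) (hWMC : 0 < WMC φ w)
    (q : ℝ)
    (hq : q = (∑ I : V → Bool, if φ I ∧ I x = true then Pw w I else 0) / WMC φ w) :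
    WMCpos φ w x - WMCneg φ w x = (WMC φ w / (1 - w x)) * (q / w x - 1) := by
  have hPw : ∀ I : V → Bool, Pw w I =
      (if I x then w x else 1 - w x) *
        ∏ v ∈ Finset.univ.erase x, (if I v then w v else 1 - w v) :=
    fun I => (Finset.mul_prod_erase _ _ (Finset.mem_univ x)).symm
  have hA : (∑ I : V → Bool, if φ I ∧ I x = true then Pw w I else 0)
      = w x * WMCpos φ w x := by
    rw [WMCpos, Finset.mul_sum]
    apply Finset.sum_congr rfl
    intro I _
    by_cases h : φ I ∧ I x = true
    · simp [h, hPw I, h.2]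
    · simp [h]
  have hB : WMC φ w = w x * WMCpos φ w x + (1 - w x) * WMCneg φ w x := by
    rw [WMC, WMCpos, WMCneg, Finset.mul_sum, Finset.mul_sum,
      ← Finset.sum_add_distrib]
    apply Finset.sum_congr rfl
    intro I _
    by_cases hφ : φ I
    · cases hIx : I x <;> simp [hφ, hPw I, hIx]
    · simp [hφ]
  have hW : WMC φ w ≠ 0 := hWMC.ne'
  have h1 : (1:ℝ) - w x ≠ 0 := by linarith [hx.2]
  have h0 : w x ≠ 0 := hx.1.ne'
  rw [hq, hA]
  have key : (WMC φ w / (1 - w x)) * ((w x * WMCpos φ w x / WMC φ w) / w x - 1)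
      = (WMCpos φ w x - WMC φ w) / (1 - w x) := by
    field_simp
  rw [key, hB]
  field_simp
  ring
end

section
/- Sample complexity of WeightME (Theorem 6, quantitative form): fix a variable x with 0 < w x < 1, suppose WMC(φ; w) > 0, and let q = WMC(φ ∧ x; w) / WMC(φ; w). Assume |q - w x| > λ for some λ > 0, and fix ε > 0, δ ∈ (0, 1), and s ≥ 1. Let μ be the distribution of s i.i.d. samples M₁, …, M_s from the weighted model distribution P̃ (P̃(M) = P(M; w) / WMC(φ; w) for models M of φ, and 0 otherwise), and let T' = (1/s) ∑_{i=1}^{s} (if Mᵢ x = true then 1 else 0). If s ≥ log(2/δ) / (2 ε² λ²), then μ{ |T' - q| > ε · |q - w x| } ≤ 2 · exp(-2 s ε² (q - w x)²) ≤ δ. -/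
-- STATEMENT 15: sample complexity of WeightME: with `q = WMC(φ ∧ x; w) / WMC(φ; w)`,
-- `|q - w x| > λ > 0`, and `s ≥ log(2/δ) / (2 ε² λ²)` i.i.d. samples from the weighted
-- model distribution, the sample mean `T'` of the indicator of `x` satisfies
-- `μ{ |T' - q| > ε·|q - w x| } ≤ 2·exp(-2 s ε² (q - w x)²) ≤ δ`.

lemma hoeffding_aux (q : ℝ) (h0 : 0 ≤ q) (h1 : q ≤ 1) (c : ℝ) :
    q * Real.exp (c * (1 - q)) + (1 - q) * Real.exp (-(c * q)) ≤ Real.exp (c ^ 2 / 8) := by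
  set h : ℝ → ℝ := fun y => 1 - q + q * Real.exp y with hh_def
  have hpos : ∀ y, 0 < h y := by
    intro y
    rcases eq_or_lt_of_le h1 with h | h
    · subst h; simpa [hh_def] using Real.exp_pos y
    · have := mul_nonneg h0 (Real.exp_pos y).le
      simp only [hh_def]; linarith
  set F : ℝ → ℝ := fun y => y * q + y ^ 2 / 8 - Real.log (h y) with hF_def
  set G : ℝ → ℝ := fun y => q + y / 4 - q * Real.exp y / h y with hG_def
  have hh' : ∀ y, HasDerivAt h (q * Real.exp y) y := by
    intro y
    exact ((Real.hasDerivAt_exp y).const_mul q).const_add (1 - q)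
  have hF' : ∀ y, HasDerivAt F (G y) y := by
    intro y
    have hlog : HasDerivAt (fun y => Real.log (h y)) (q * Real.exp y / h y) y :=
      (hh' y).log (hpos y).ne'
    have hp1 : HasDerivAt (fun y : ℝ => y * q + y ^ 2 / 8) (q + y / 4) y := by
      have := ((hasDerivAt_pow 2 y).div_const 8).const_add 0
      have h2 : HasDerivAt (fun y : ℝ => y * q) q y := by
        simpa using (hasDerivAt_id y).mul_const q
      have h3 : HasDerivAt (fun y : ℝ => y ^ 2 / 8) (y / 4) y := by
        have := (hasDerivAt_pow 2 y).div_const 8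
        exact this.congr_deriv (by ring)
      exact h2.add h3
    exact hp1.sub hlog
  have hG' : ∀ y, HasDerivAt G
      (1 / 4 - (q * Real.exp y * h y - q * Real.exp y * (q * Real.exp y)) / (h y) ^ 2) y := by
    intro y
    have hu : HasDerivAt (fun y => q * Real.exp y) (q * Real.exp y) y :=
      (Real.hasDerivAt_exp y).const_mul q
    have hdiv : HasDerivAt (fun y => q * Real.exp y / h y)
        ((q * Real.exp y * h y - q * Real.exp y * (q * Real.exp y)) / (h y) ^ 2) y :=
      hu.div (hh' y) (hpos y).ne'
    have hlin : HasDerivAt (fun y : ℝ => q + y / 4) (1 / 4) y := by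
      simpa using ((hasDerivAt_id y).div_const 4).const_add q
    exact hlin.sub hdiv
  have hD : ∀ y, 0 ≤ 1 / 4 - (q * Real.exp y * h y - q * Real.exp y * (q * Real.exp y)) / (h y) ^ 2 := by
    intro y
    have hu0 : 0 ≤ q * Real.exp y := mul_nonneg h0 (Real.exp_pos y).le
    have hu1 : q * Real.exp y ≤ h y := by simp only [hh_def]; linarith
    have hhy := hpos y
    obtain ⟨u, hu_def⟩ : ∃ u, u = q * Real.exp y := ⟨_, rfl⟩
    obtain ⟨H, hH_def⟩ : ∃ H, H = h y := ⟨_, rfl⟩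
    rw [← hu_def] at hu0 hu1 ⊢
    rw [← hH_def] at hu1 hhy ⊢
    rw [sub_nonneg, div_le_iff₀ (by positivity)]
    nlinarith [sq_nonneg (2 * u - H)]
  have hGmono : Monotone G :=
    monotone_of_deriv_nonneg (fun y => (hG' y).differentiableAt)
      (fun y => by rw [(hG' y).deriv]; exact hD y)
  have hG0 : G 0 = 0 := by simp [hG_def, hh_def]
  have hFdiff : Differentiable ℝ F := fun y => (hF' y).differentiableAt
  have hF0 : F 0 = 0 := by simp [hF_def, hh_def]
  have hFnonneg : ∀ y, 0 ≤ F y := by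
    intro y
    rcases le_total 0 y with hy | hy
    · have hmono : MonotoneOn F (Set.Ici 0) :=
        monotoneOn_of_deriv_nonneg (convex_Ici 0) hFdiff.continuous.continuousOn
          hFdiff.differentiableOn
          (fun z hz => by
            rw [(hF' z).deriv, ← hG0]
            exact hGmono (le_of_lt (by simpa using hz)))
      have := hmono (Set.self_mem_Ici) (Set.mem_Ici.mpr hy) hy
      linarith [hF0 ▸ this]
    · have hanti : AntitoneOn F (Set.Iic 0) :=
        antitoneOn_of_deriv_nonpos (convex_Iic 0) hFdiff.continuous.continuousOn
          hFdiff.differentiableOn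
          (fun z hz => by
            rw [(hF' z).deriv, ← hG0]
            exact hGmono (le_of_lt (by simpa using hz)))
      have := hanti (Set.mem_Iic.mpr hy) (Set.self_mem_Iic) hy
      linarith [hF0 ▸ this]
  have key : Real.log (h c) ≤ c * q + c ^ 2 / 8 := by
    have := hFnonneg c
    simp only [hF_def] at this
    linarith
  have hLHS : q * Real.exp (c * (1 - q)) + (1 - q) * Real.exp (-(c * q))
      = Real.exp (-(c * q)) * h c := by
    rw [show c * (1 - q) = c + -(c * q) by ring, Real.exp_add]
    simp only [hh_def]; ring
  rw [hLHS, ← Real.exp_log (hpos c), ← Real.exp_add]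
  exact Real.exp_le_exp.mpr (by linarith)


lemma chernoff_finite {Ω : Type*} [Fintype Ω] (P : Ω → ℝ) (hP : ∀ ω, 0 ≤ P ω)
    (X : Ω → ℝ) (c a : ℝ) (hc : 0 ≤ c) (s : ℕ) :
    (∑ f : Fin s → Ω, if a ≤ ∑ i, X (f i) then ∏ i, P (f i) else 0)
      ≤ Real.exp (-(c * a)) * (∑ ω, Real.exp (c * X ω) * P ω) ^ s := by
  have step1 : ∀ f : Fin s → Ω,
      (if a ≤ ∑ i, X (f i) then ∏ i, P (f i) else 0)
        ≤ Real.exp (-(c * a)) * ∏ i, Real.exp (c * X (f i)) * P (f i) := by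
    intro f
    have hprod : 0 ≤ ∏ i, P (f i) := Finset.prod_nonneg fun i _ => hP _
    have hrhs : Real.exp (-(c * a)) * ∏ i, Real.exp (c * X (f i)) * P (f i)
        = Real.exp (c * (∑ i, X (f i)) - c * a) * ∏ i, P (f i) := by
      rw [Finset.prod_mul_distrib, ← Real.exp_sum, ← Finset.mul_sum,
        Real.exp_sub, Real.exp_neg]
      ring
    rw [hrhs]
    split_ifs with hev
    · nth_rewrite 1 [← one_mul (∏ i, P (f i))]
      apply mul_le_mul_of_nonneg_right _ hprod
      rw [← Real.exp_zero]
      apply Real.exp_le_exp.mpr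
      have : 0 ≤ c * (∑ i, X (f i)) - c * a := by
        rw [← mul_sub]
        exact mul_nonneg hc (by linarith)
      linarith
    · positivity
  calc (∑ f : Fin s → Ω, if a ≤ ∑ i, X (f i) then ∏ i, P (f i) else 0)
      ≤ ∑ f : Fin s → Ω, Real.exp (-(c * a)) * ∏ i, Real.exp (c * X (f i)) * P (f i) :=
        Finset.sum_le_sum fun f _ => step1 f
    _ = Real.exp (-(c * a)) * ∑ f : Fin s → Ω, ∏ i, Real.exp (c * X (f i)) * P (f i) := by
        rw [Finset.mul_sum]
    _ = Real.exp (-(c * a)) * (∑ ω, Real.exp (c * X ω) * P ω) ^ s := by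
        congr 1
        rw [← Fintype.prod_sum (fun (_ : Fin s) (ω : Ω) => Real.exp (c * X ω) * P ω)]
        simp [Finset.prod_const]

set_option maxHeartbeats 2000000 in
open Classical in
theorem weightme_sample_complexity {V : Type*} [Fintype V] [DecidableEq V]
    (φ : (V → Bool) → Prop) (w : V → ℝ) (hw : ∀ v, 0 ≤ w v ∧ w v ≤ 1) (x : V)
    (hx : 0 < w x ∧ w x < 1) (hWMC : 0 < WMC φ w)
    (q lam ε δ : ℝ)
    (hq : q = (∑ I : V → Bool, if φ I ∧ I x = true then Pw w I else 0) / WMC φ w)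
    (hlam : 0 < lam) (hgap : |q - w x| > lam)
    (hε : 0 < ε) (hδ : 0 < δ ∧ δ < 1)
    (s : ℕ) (hs : 1 ≤ s)
    (hsc : (s : ℝ) ≥ Real.log (2 / δ) / (2 * ε ^ 2 * lam ^ 2)) :
    (∑ f : Fin s → (V → Bool),
      if |(∑ i, if f i x = true then (1 : ℝ) else 0) / s - q| > ε * |q - w x|
      then ∏ i, (if φ (f i) then Pw w (f i) / WMC φ w else 0) else 0)
        ≤ 2 * Real.exp (-2 * s * ε ^ 2 * (q - w x) ^ 2) ∧
    2 * Real.exp (-2 * s * ε ^ 2 * (q - w x) ^ 2) ≤ δ := by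
  set P : (V → Bool) → ℝ := fun I => if φ I then Pw w I / WMC φ w else 0 with hP_def
  have habs : lam < |q - w x| := hgap
  have hscast : (0 : ℝ) < (s : ℝ) := by exact_mod_cast Nat.lt_of_lt_of_le Nat.zero_lt_one hs
  -- basic facts about P
  have hPw0 : ∀ I : V → Bool, 0 ≤ Pw w I := by
    intro I
    apply Finset.prod_nonneg
    intro v _
    rcases hw v with ⟨h1, h2⟩
    split_ifs <;> linarith
  have hP0 : ∀ I : V → Bool, 0 ≤ P I := by
    intro I
    simp only [hP_def]
    split_ifs
    · exact div_nonneg (hPw0 I) hWMC.le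
    · exact le_refl 0
  have hPsum : ∑ I : V → Bool, P I = 1 := by
    have h1 : ∀ I : V → Bool, P I = (if φ I then Pw w I else 0) / WMC φ w := by
      intro I; simp only [hP_def]; split_ifs <;> simp
    rw [Finset.sum_congr rfl fun I _ => h1 I, ← Finset.sum_div]
    rw [show (∑ I : V → Bool, if φ I then Pw w I else 0) = WMC φ w from rfl]
    exact div_self hWMC.ne'
  have hq' : q = ∑ I : V → Bool, if I x = true then P I else 0 := by
    rw [hq, Finset.sum_div]
    apply Finset.sum_congr rfl
    intro I _
    simp only [hP_def]
    by_cases hIx : I x = true <;> by_cases hφ : φ I <;> simp [hIx, hφ]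
  have hq0 : 0 ≤ q := by
    rw [hq']
    apply Finset.sum_nonneg
    intro I _
    split_ifs
    · exact hP0 I
    · exact le_refl 0
  have hq1 : q ≤ 1 := by
    rw [hq', ← hPsum]
    apply Finset.sum_le_sum
    intro I _
    split_ifs
    · exact le_refl _
    · exact hP0 I
  set t : ℝ := ε * |q - w x| with ht_def
  have ht : 0 < t := mul_pos hε (lt_trans hlam habs)
  have hteq : t ^ 2 = ε ^ 2 * (q - w x) ^ 2 := by
    rw [ht_def, mul_pow, sq_abs]
  -- the two one-sided random variables
  set X1 : (V → Bool) → ℝ := fun I => (if I x = true then (1 : ℝ) else 0) - q with hX1_def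
  set X2 : (V → Bool) → ℝ := fun I => q - (if I x = true then (1 : ℝ) else 0) with hX2_def
  -- pointwise splitting of the two-sided event
  have step : ∀ f : Fin s → (V → Bool),
      (if |(∑ i, if f i x = true then (1 : ℝ) else 0) / s - q| > t
        then ∏ i, P (f i) else 0)
      ≤ (if (s : ℝ) * t ≤ ∑ i, X1 (f i) then ∏ i, P (f i) else 0)
        + (if (s : ℝ) * t ≤ ∑ i, X2 (f i) then ∏ i, P (f i) else 0) := by
    intro f
    have hprodf : 0 ≤ ∏ i, P (f i) := Finset.prod_nonneg fun i _ => hP0 _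
    set Sf : ℝ := ∑ i, if f i x = true then (1 : ℝ) else 0 with hSf_def
    have hA : (∑ i, X1 (f i)) = Sf - s * q := by
      simp only [hX1_def, Finset.sum_sub_distrib, Finset.sum_const, Finset.card_univ,
        Fintype.card_fin, nsmul_eq_mul, hSf_def]
    have hB : (∑ i, X2 (f i)) = s * q - Sf := by
      simp only [hX2_def, Finset.sum_sub_distrib, Finset.sum_const, Finset.card_univ,
        Fintype.card_fin, nsmul_eq_mul, hSf_def]
    have himp : |Sf / s - q| > t → (s : ℝ) * t ≤ ∑ i, X1 (f i) ∨ (s : ℝ) * t ≤ ∑ i, X2 (f i) := by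
      intro hev
      have hrw : Sf / s - q = (Sf - s * q) / s := by field_simp
      rcases lt_abs.mp hev with h | h
      · left
        rw [hrw] at h
        have := (lt_div_iff₀ hscast).mp h
        rw [hA]
        nlinarith
      · right
        have hrw2 : -(Sf / s - q) = (s * q - Sf) / s := by field_simp; ring
        rw [hrw2] at h
        have := (lt_div_iff₀ hscast).mp h
        rw [hB]
        nlinarith
    by_cases h1 : |Sf / s - q| > t
    · rw [if_pos h1]
      rcases himp h1 with h | h
      · rw [if_pos h]
        have : (0:ℝ) ≤ if (s : ℝ) * t ≤ ∑ i, X2 (f i) then ∏ i, P (f i) else 0 := by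
          split_ifs
          · exact hprodf
          · exact le_refl 0
        linarith
      · rw [if_pos h]
        have : (0:ℝ) ≤ if (s : ℝ) * t ≤ ∑ i, X1 (f i) then ∏ i, P (f i) else 0 := by
          split_ifs
          · exact hprodf
          · exact le_refl 0
        linarith
    · rw [if_neg h1]
      have h2 : (0:ℝ) ≤ if (s : ℝ) * t ≤ ∑ i, X1 (f i) then ∏ i, P (f i) else 0 := by
        split_ifs
        · exact hprodf
        · exact le_refl 0
      have h3 : (0:ℝ) ≤ if (s : ℝ) * t ≤ ∑ i, X2 (f i) then ∏ i, P (f i) else 0 := by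
        split_ifs
        · exact hprodf
        · exact le_refl 0
      linarith
  -- the mgf computations
  have hsum0q : ∑ I : V → Bool, (if I x = true then (0:ℝ) else P I) = 1 - q := by
    have h2 : ∀ I : V → Bool, (if I x = true then (0:ℝ) else P I)
        = P I - (if I x = true then P I else 0) := by
      intro I; split_ifs <;> ring
    rw [Finset.sum_congr rfl fun I _ => h2 I, Finset.sum_sub_distrib, hPsum, ← hq']
  have hM1 : (∑ I : V → Bool, Real.exp (4 * t * X1 I) * P I)
      = q * Real.exp (4 * t * (1 - q)) + (1 - q) * Real.exp (-(4 * t * q)) := by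
    have h3 : ∀ I : V → Bool, Real.exp (4 * t * X1 I) * P I
        = Real.exp (4 * t * (1 - q)) * (if I x = true then P I else 0)
          + Real.exp (-(4 * t * q)) * (if I x = true then (0:ℝ) else P I) := by
      intro I
      simp only [hX1_def]
      split_ifs with hIx
      · simp
      · rw [show 4 * t * ((0:ℝ) - q) = -(4 * t * q) by ring]
        simp
    rw [Finset.sum_congr rfl fun I _ => h3 I, Finset.sum_add_distrib,
      ← Finset.mul_sum, ← Finset.mul_sum, ← hq', hsum0q]
    ring
  have hM2 : (∑ I : V → Bool, Real.exp (4 * t * X2 I) * P I)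
      = (1 - q) * Real.exp (4 * t * (1 - (1 - q)))
          + (1 - (1 - q)) * Real.exp (-(4 * t * (1 - q))) := by
    have h3 : ∀ I : V → Bool, Real.exp (4 * t * X2 I) * P I
        = Real.exp (4 * t * (1 - (1 - q))) * (if I x = true then (0:ℝ) else P I)
          + Real.exp (-(4 * t * (1 - q))) * (if I x = true then P I else 0) := by
      intro I
      simp only [hX2_def]
      split_ifs with hIx
      · rw [show 4 * t * (q - (1:ℝ)) = -(4 * t * (1 - q)) by ring]
        simp
      · rw [show 4 * t * (q - (0:ℝ)) = 4 * t * (1 - (1 - q)) by ring]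
        simp
    rw [Finset.sum_congr rfl fun I _ => h3 I, Finset.sum_add_distrib,
      ← Finset.mul_sum, ← Finset.mul_sum, ← hq', hsum0q]
    ring
  have hM1le : (∑ I : V → Bool, Real.exp (4 * t * X1 I) * P I) ≤ Real.exp (2 * t ^ 2) := by
    rw [hM1]
    refine (hoeffding_aux q hq0 hq1 (4 * t)).trans (le_of_eq ?_)
    congr 1; ring
  have hM2le : (∑ I : V → Bool, Real.exp (4 * t * X2 I) * P I) ≤ Real.exp (2 * t ^ 2) := by
    rw [hM2]
    refine (hoeffding_aux (1 - q) (by linarith) (by linarith) (4 * t)).trans (le_of_eq ?_)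
    congr 1; ring
  have hMnonneg : ∀ X : (V → Bool) → ℝ,
      0 ≤ ∑ I : V → Bool, Real.exp (4 * t * X I) * P I := by
    intro X
    apply Finset.sum_nonneg
    intro I _
    exact mul_nonneg (Real.exp_pos _).le (hP0 I)
  -- one-sided bounds
  have hone : ∀ X : (V → Bool) → ℝ,
      (∑ I : V → Bool, Real.exp (4 * t * X I) * P I) ≤ Real.exp (2 * t ^ 2) →
      (∑ f : Fin s → (V → Bool), if (s : ℝ) * t ≤ ∑ i, X (f i) then ∏ i, P (f i) else 0)
        ≤ Real.exp (-(2 * s * t ^ 2)) := by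
    intro X hXle
    refine (chernoff_finite P hP0 X (4 * t) ((s : ℝ) * t) (by positivity) s).trans ?_
    calc Real.exp (-(4 * t * ((s : ℝ) * t))) * (∑ ω, Real.exp (4 * t * X ω) * P ω) ^ s
        ≤ Real.exp (-(4 * t * ((s : ℝ) * t))) * Real.exp (2 * t ^ 2) ^ s := by
          apply mul_le_mul_of_nonneg_left _ (Real.exp_pos _).le
          exact pow_le_pow_left₀ (hMnonneg X) hXle s
      _ = Real.exp (-(2 * s * t ^ 2)) := by
          rw [← Real.exp_nat_mul, ← Real.exp_add]
          congr 1; ring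
  have hbound1 := hone X1 hM1le
  have hbound2 := hone X2 hM2le
  constructor
  · calc (∑ f : Fin s → (V → Bool),
        if |(∑ i, if f i x = true then (1 : ℝ) else 0) / s - q| > t
        then ∏ i, P (f i) else 0)
        ≤ ∑ f : Fin s → (V → Bool),
          ((if (s : ℝ) * t ≤ ∑ i, X1 (f i) then ∏ i, P (f i) else 0)
            + (if (s : ℝ) * t ≤ ∑ i, X2 (f i) then ∏ i, P (f i) else 0)) :=
          Finset.sum_le_sum fun f _ => step f
      _ = (∑ f : Fin s → (V → Bool), if (s : ℝ) * t ≤ ∑ i, X1 (f i) then ∏ i, P (f i) else 0)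
          + (∑ f : Fin s → (V → Bool), if (s : ℝ) * t ≤ ∑ i, X2 (f i) then ∏ i, P (f i) else 0) :=
          Finset.sum_add_distrib
      _ ≤ Real.exp (-(2 * s * t ^ 2)) + Real.exp (-(2 * s * t ^ 2)) := add_le_add hbound1 hbound2
      _ = 2 * Real.exp (-2 * s * ε ^ 2 * (q - w x) ^ 2) := by
          rw [show (-2 : ℝ) * s * ε ^ 2 * (q - w x) ^ 2 = -(2 * s * (ε ^ 2 * (q - w x) ^ 2)) by ring,
            ← hteq]
          ring
  · -- second part
    have hlam2 : lam ^ 2 ≤ (q - w x) ^ 2 := by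
      rw [← sq_abs (q - w x)]
      exact pow_le_pow_left₀ hlam.le habs.le 2
    have hden : (0:ℝ) < 2 * ε ^ 2 * lam ^ 2 := by positivity
    have hlog : Real.log (2 / δ) ≤ (s : ℝ) * (2 * ε ^ 2 * lam ^ 2) := by
      have h4 := (div_le_iff₀ hden).mp hsc
      linarith
    have hexp : Real.exp (-2 * s * ε ^ 2 * (q - w x) ^ 2) ≤ δ / 2 := by
      have h5 : -2 * (s : ℝ) * ε ^ 2 * (q - w x) ^ 2 ≤ -Real.log (2 / δ) := by
        nlinarith [hlog, mul_le_mul_of_nonneg_left hlam2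
          (show (0:ℝ) ≤ 2 * (s : ℝ) * ε ^ 2 by positivity)]
      calc Real.exp (-2 * s * ε ^ 2 * (q - w x) ^ 2) ≤ Real.exp (-Real.log (2 / δ)) :=
            Real.exp_le_exp.mpr h5
        _ = δ / 2 := by
            rw [Real.exp_neg, Real.exp_log (div_pos two_pos hδ.1)]
            rw [inv_div]
      
    linarith
end

section
/- Bias of WeightME under an approximate weighted model sampler: fix a variable x with 0 < w x < 1 and suppose WMC(φ; w) > 0. Let P̃(M) = P(M; w) / WMC(φ; w) for models M of φ, and let Q be any probability mass function supported on the models of φ such that (1 - ε) · P̃(M) ≤ Q(M) ≤ (1 + ε) · P̃(M) for every model M, where 0 ≤ ε. Let X(M) = 1 / (w x) if M x = true and X(M) = -1 / (1 - w x) otherwise. Then |∑_{M : φ M} Q(M) · X(M) - (WMC(φ ∣ x; w) - WMC(φ ∣ ¬x; w)) / WMC(φ; w)| ≤ ε · max (1 / (w x)) (1 / (1 - w x)). -/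
-- STATEMENT 16: bias of WeightME under an `ε`-approximate weighted model sampler `Q`:
-- the expectation of `X` under `Q` deviates from the true value
-- `(WMC(φ ∣ x; w) - WMC(φ ∣ ¬x; w)) / WMC(φ; w)` by at most
-- `ε · max (1 / w x) (1 / (1 - w x))`.
open Classical in
theorem weightme_approximate_sampler_bias {V : Type*} [Fintype V] [DecidableEq V]
    (φ : (V → Bool) → Prop) (w : V → ℝ) (hw : ∀ v, 0 ≤ w v ∧ w v ≤ 1) (x : V)
    (hx : 0 < w x ∧ w x < 1) (hWMC : 0 < WMC φ w)
    (ε : ℝ) (hε : 0 ≤ ε)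
    (Q : (V → Bool) → ℝ)
    (hQnn : ∀ M : V → Bool, 0 ≤ Q M)
    (hQsupp : ∀ M : V → Bool, ¬ φ M → Q M = 0)
    (hQsum : ∑ M : V → Bool, Q M = 1)
    (hQapprox : ∀ M : V → Bool, φ M →
      (1 - ε) * (Pw w M / WMC φ w) ≤ Q M ∧ Q M ≤ (1 + ε) * (Pw w M / WMC φ w)) :
    |(∑ M : V → Bool, if φ M then
        Q M * (if M x = true then 1 / w x else -(1 / (1 - w x))) else 0)
      - (WMCpos φ w x - WMCneg φ w x) / WMC φ w|
      ≤ ε * max (1 / w x) (1 / (1 - w x)) := by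
  obtain ⟨hx0, hx1⟩ := hx
  have hwx : w x ≠ 0 := ne_of_gt hx0
  have hwx1 : (1 : ℝ) - w x ≠ 0 := by linarith
  have hAne : WMC φ w ≠ 0 := ne_of_gt hWMC
  set K := max (1 / w x) (1 / (1 - w x)) with hK
  have hPnn : ∀ M : V → Bool, 0 ≤ Pw w M := by
    intro M
    apply Finset.prod_nonneg
    intro v _
    by_cases h : M v
    · simp [h, (hw v).1]
    · simp [h]; linarith [(hw v).2]
  have hkey : (WMCpos φ w x - WMCneg φ w x) / WMC φ w
      = ∑ M : V → Bool, if φ M then (Pw w M / WMC φ w) *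
          (if M x = true then 1 / w x else -(1 / (1 - w x))) else 0 := by
    rw [WMCpos, WMCneg, ← Finset.sum_sub_distrib, Finset.sum_div]
    apply Finset.sum_congr rfl
    intro M _
    by_cases hφ : φ M
    · have hPw : Pw w M = (if M x then w x else 1 - w x) *
          ∏ v ∈ Finset.univ.erase x, (if M v then w v else 1 - w v) := by
        rw [Pw, ← Finset.mul_prod_erase _ _ (Finset.mem_univ x)]
      by_cases hMx : M x = true
      · rw [if_pos ⟨hφ, hMx⟩, if_neg (by simp [hMx]), if_pos hφ, if_pos hMx, hPw, if_pos hMx]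
        field_simp
        ring
      · have hMx' : M x = false := by simpa using hMx
        rw [if_neg (by simp [hMx']), if_pos ⟨hφ, hMx'⟩, if_pos hφ, if_neg hMx, hPw, if_neg hMx]
        field_simp
        ring
    · simp [hφ]
  rw [hkey, ← Finset.sum_sub_distrib]
  have hstep : ∀ M : V → Bool,
      |(if φ M then Q M * (if M x = true then 1 / w x else -(1 / (1 - w x))) else 0)
        - (if φ M then (Pw w M / WMC φ w) *
          (if M x = true then 1 / w x else -(1 / (1 - w x))) else 0)|
      ≤ (if φ M then ε * (Pw w M / WMC φ w) * K else 0) := by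
    intro M
    by_cases hφ : φ M
    · simp only [hφ, if_true]
      rw [← sub_mul, abs_mul]
      have h1 : |Q M - Pw w M / WMC φ w| ≤ ε * (Pw w M / WMC φ w) := by
        obtain ⟨hl, hr⟩ := hQapprox M hφ
        rw [abs_le]
        constructor <;> nlinarith [hPnn M, div_nonneg (hPnn M) hWMC.le]
      have h2 : |if M x = true then 1 / w x else -(1 / (1 - w x))| ≤ K := by
        by_cases hMx : M x = true
        · rw [if_pos hMx, abs_of_pos (one_div_pos.mpr hx0)]; exact le_max_left _ _
        · rw [if_neg hMx, abs_neg, abs_of_pos (one_div_pos.mpr (by linarith : (0:ℝ) < 1 - w x))]; exact le_max_right _ _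
      calc |Q M - Pw w M / WMC φ w| * |if M x = true then 1 / w x else -(1 / (1 - w x))|
          ≤ (ε * (Pw w M / WMC φ w)) * K := by
            exact mul_le_mul h1 h2 (abs_nonneg _)
              (mul_nonneg hε (div_nonneg (hPnn M) hWMC.le))
        _ = ε * (Pw w M / WMC φ w) * K := by ring
    · simp [hφ]
  calc |∑ M : V → Bool, ((if φ M then Q M * (if M x = true then 1 / w x else -(1 / (1 - w x))) else 0)
        - (if φ M then (Pw w M / WMC φ w) * (if M x = true then 1 / w x else -(1 / (1 - w x))) else 0))|
      ≤ ∑ M : V → Bool, (if φ M then ε * (Pw w M / WMC φ w) * K else 0) :=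
        (Finset.abs_sum_le_sum_abs _ _).trans (Finset.sum_le_sum fun M _ => hstep M)
    _ = ε * K := by
        have : ∑ M : V → Bool, (if φ M then ε * (Pw w M / WMC φ w) * K else 0)
            = (ε * K / WMC φ w) * ∑ M : V → Bool, (if φ M then Pw w M else 0) := by
          rw [Finset.mul_sum]
          apply Finset.sum_congr rfl
          intro M _
          by_cases hφ : φ M <;> simp [hφ] <;> ring
        rw [this, ← WMC]
        field_simp
end
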